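/- For every real t with 0 ≤ t < 1, the series ∑_{n=1}^∞ H_n · t^n/(2n−1) converges and equals log(1−t) + ( −1 + log √2 + (1/4)·log(1−t) ) · √t · log((1−√t)/(1+√t)) + (√t/2) · ( Li₂((1+√t)/2) − Li₂((1−√t)/2) ). -/

import Mathlib

/-!
With `t = s²` the series is `s · ψ(s)` for `ψ(s) = ∑ H_{n+1} s^{2n+1}/(2n+1)`. Termwise
differentiation and the generating function `∑ Hₙ xⁿ = -log(1-x)/(1-x)` give
`ψ'(s) = -log(1-s²)/(s²(1-s²))`. The claimed closed form divided by `s` has the same derivative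
on `(0,1)`, by `Li₂'(x) = -log(1-x)/x`, and both functions tend to `0` as `s → 0⁺`.
-/

open Real

/-- The real dilogarithm `Li₂(x) = ∑_{n=1}^∞ xⁿ/n²`. -/
noncomputable def Li2 (x : ℝ) : ℝ := ∑' n : ℕ, x ^ (n + 1) / (n + 1) ^ 2

open Filter Topology Set

lemma harmonic_nonneg (n : ℕ) : (0 : ℝ) ≤ harmonic n := by
  unfold harmonic; push_cast; positivity

lemma harmonic_le_self (n : ℕ) : (harmonic n : ℝ) ≤ n := by
  induction n with
  | zero => simp
  | succ n ih =>
    have : ((n : ℝ) + 1)⁻¹ ≤ 1 := inv_le_one_of_one_le₀ (by simp)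
    push_cast [harmonic_succ]
    linarith

lemma summable_harmonic_mul_pow {x : ℝ} (hx : |x| < 1) :
    Summable fun n : ℕ => (harmonic n : ℝ) * x ^ n := by
  refine .of_norm_bounded (summable_pow_mul_geometric_of_norm_lt_one 1 (r := |x|) (by simpa)) ?_
  intro n
  rw [norm_mul, norm_pow, Real.norm_of_nonneg (harmonic_nonneg n), pow_one, norm_eq_abs]
  gcongr
  exact harmonic_le_self n

lemma hasSum_harmonic_mul_pow {x : ℝ} (hx : |x| < 1) :
    HasSum (fun n : ℕ => (harmonic n : ℝ) * x ^ n) (-log (1 - x) / (1 - x)) := by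
  set f : ℕ → ℝ := fun n => (harmonic n : ℝ) * x ^ n
  have hf : HasSum f (∑' n, f n) := (summable_harmonic_mul_pow hx).hasSum
  have hshift : HasSum (fun n => f (n + 1)) (∑' n, f n) := by
    simpa [f] using (hasSum_nat_add_iff' 1).mpr hf
  -- `H_{n+1} - Hₙ = 1/(n+1)` turns `(1 - x) ∑ Hₙ xⁿ` into the series of `-log (1 - x)`
  have hdiff : HasSum (fun n => f (n + 1) - x * f n) (∑' n, f n - x * ∑' n, f n) :=
    hshift.sub (hf.mul_left x)
  have hterm : (fun n => f (n + 1) - x * f n) = fun n : ℕ => x ^ (n + 1) / (n + 1) := by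
    ext n; simp only [f, harmonic_succ]; push_cast; ring
  rw [hterm] at hdiff
  have hx1 : 1 - x ≠ 0 := by linarith [(abs_lt.mp hx).2]
  rw [← hdiff.unique (hasSum_pow_div_log_of_abs_lt_one hx), ← one_sub_mul,
    mul_div_cancel_left₀ _ hx1]
  exact hf

lemma hasDerivAt_tsum_mul_pow_succ_div {a : ℕ → ℝ} {m : ℕ → ℕ}
    (ha : ∀ r ∈ Ioo (0 : ℝ) 1, Summable fun n => |a n| * r ^ m n) {x : ℝ} (hx : |x| < 1) :
    HasDerivAt (fun y => ∑' n, a n * y ^ (m n + 1) / (m n + 1)) (∑' n, a n * x ^ m n) x := by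
  obtain ⟨r, hxr, hr1⟩ := exists_between hx
  have hr0 : 0 < r := (abs_nonneg x).trans_lt hxr
  refine hasDerivAt_tsum_of_isPreconnected (g := fun n y => a n * y ^ (m n + 1) / (m n + 1))
    (g' := fun n y => a n * y ^ m n) (ha r ⟨hr0, hr1⟩) isOpen_Ioo isPreconnected_Ioo
    (fun n y _ => ?_) (fun n y hy => ?_) (y₀ := 0) ⟨neg_lt_zero.mpr hr0, hr0⟩ ?_
    (abs_lt.mp hxr)
  · refine (((hasDerivAt_pow (m n + 1) y).const_mul (a n)).div_const _).congr_deriv ?_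
    rw [Nat.add_sub_cancel]
    push_cast
    field_simp
  · rw [norm_mul, norm_pow, norm_eq_abs, norm_eq_abs]
    gcongr
    exact (abs_lt.mpr hy).le
  · simp

lemma hasDerivAt_Li2 {x : ℝ} (hx0 : x ≠ 0) (hx : |x| < 1) :
    HasDerivAt Li2 (-log (1 - x) / x) x := by
  have hLi2 : Li2 = fun y => ∑' n : ℕ, ((n : ℝ) + 1)⁻¹ * y ^ (n + 1) / (n + 1) := by
    ext y
    exact tsum_congr fun n => by field_simp
  have hsum : HasSum (fun n : ℕ => ((n : ℝ) + 1)⁻¹ * x ^ n) (-log (1 - x) / x) :=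
    (hasSum_pow_div_log_of_abs_lt_one hx).div_const x |>.congr_fun fun n => by
      rw [pow_succ]
      field_simp
  rw [hLi2, ← hsum.tsum_eq]
  refine hasDerivAt_tsum_mul_pow_succ_div (m := fun n => n) (fun r hr => ?_) hx
  refine (summable_geometric_of_lt_one hr.1.le hr.2).of_nonneg_of_le
    (fun n => mul_nonneg (abs_nonneg _) (pow_nonneg hr.1.le n)) fun n => ?_
  rw [abs_of_pos (by positivity : (0 : ℝ) < ((n : ℝ) + 1)⁻¹)]
  exact mul_le_of_le_one_left (pow_nonneg hr.1.le n) (inv_le_one_of_one_le₀ (by simp))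

noncomputable def harmonicOddSeries (s : ℝ) : ℝ :=
  ∑' n : ℕ, (harmonic (n + 1) : ℝ) * s ^ (2 * n + 1) / (2 * n + 1)

lemma hasSum_harmonic_succ_mul_pow_two_mul {s : ℝ} (hs0 : s ≠ 0) (hs : |s| < 1) :
    HasSum (fun n : ℕ => (harmonic (n + 1) : ℝ) * s ^ (2 * n))
      (-log (1 - s ^ 2) / (s ^ 2 * (1 - s ^ 2))) := by
  have hs2 : |s ^ 2| < 1 := by rw [abs_pow]; exact pow_lt_one₀ (abs_nonneg s) hs two_ne_zero
  have h := (hasSum_nat_add_iff' 1).mpr (hasSum_harmonic_mul_pow hs2)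
  simp only [Finset.range_one, Finset.sum_singleton, harmonic_zero, Rat.cast_zero, zero_mul,
    sub_zero] at h
  rw [mul_comm (s ^ 2), ← div_div]
  refine (h.div_const (s ^ 2)).congr_fun fun n => ?_
  rw [pow_succ, ← mul_assoc, mul_div_cancel_right₀ _ (pow_ne_zero 2 hs0), ← pow_mul]

lemma hasDerivAt_harmonicOddSeries {x : ℝ} (hx : |x| < 1) :
    HasDerivAt harmonicOddSeries (∑' n : ℕ, (harmonic (n + 1) : ℝ) * x ^ (2 * n)) x := by
  have h := hasDerivAt_tsum_mul_pow_succ_div (a := fun n => (harmonic (n + 1) : ℝ))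
    (m := fun n => 2 * n) (fun r hr => ?_) hx
  · convert h using 2 with y
    unfold harmonicOddSeries
    push_cast
    rfl
  · simp_rw [abs_of_nonneg (harmonic_nonneg _)]
    have hr' : |r| < 1 := by rw [abs_of_pos hr.1]; exact hr.2
    exact (hasSum_harmonic_succ_mul_pow_two_mul hr.1.ne' hr').summable

noncomputable def harmonicOddClosedForm (s : ℝ) : ℝ :=
  log (1 - s ^ 2) / s + (-1 + log 2 / 2 + log (1 - s ^ 2) / 4) * log ((1 - s) / (1 + s)) +
    (Li2 ((1 + s) / 2) - Li2 ((1 - s) / 2)) / 2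

lemma hasDerivAt_harmonicOddClosedForm {s : ℝ} (hs0 : s ≠ 0) (hs : |s| < 1) :
    HasDerivAt harmonicOddClosedForm (-log (1 - s ^ 2) / (s ^ 2 * (1 - s ^ 2))) s := by
  obtain ⟨hs₁, hs₂⟩ := abs_lt.mp hs
  have hm : 1 - s ≠ 0 := by linarith
  have hp : 1 + s ≠ 0 := by linarith
  have hsq : 1 - s ^ 2 = (1 - s) * (1 + s) := by ring
  have hL : HasDerivAt (fun y => log (1 - y ^ 2)) (-2 * s / (1 - s ^ 2)) s :=
    (((hasDerivAt_pow 2 s).const_sub 1).log (hsq ▸ mul_ne_zero hm hp)).congr_deriv (by simp)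
  have hQ : HasDerivAt (fun y => log ((1 - y) / (1 + y))) (-2 / (1 - s ^ 2)) s := by
    refine ((((hasDerivAt_id' s).const_sub 1).div ((hasDerivAt_id' s).const_add 1) hp).log
      (div_ne_zero hm hp)).congr_deriv ?_
    rw [Pi.div_apply, hsq]
    field_simp
    ring
  have hLi₁ := (hasDerivAt_Li2 (x := (1 + s) / 2) (by linarith)
    (abs_lt.mpr ⟨by linarith, by linarith⟩)).comp s
    (((hasDerivAt_id' s).const_add 1).div_const 2)
  have hLi₂ := (hasDerivAt_Li2 (x := (1 - s) / 2) (by linarith)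
    (abs_lt.mpr ⟨by linarith, by linarith⟩)).comp s
    (((hasDerivAt_id' s).const_sub 1).div_const 2)
  refine (((hL.div (hasDerivAt_id' s) hs0).add (((hL.div_const 4).const_add (-1 + log 2 / 2)).mul
    hQ)).add ((hLi₁.sub hLi₂).div_const 2)).congr_deriv ?_
  rw [show 1 - (1 + s) / 2 = (1 - s) / 2 by ring, show 1 - (1 - s) / 2 = (1 + s) / 2 by ring,
    log_div hm two_ne_zero, log_div hp two_ne_zero, log_div hm hp, hsq, log_mul hm hp]
  field_simp
  ring

lemma tendsto_harmonicOddClosedForm_nhdsGT_zero :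
    Tendsto harmonicOddClosedForm (𝓝[>] 0) (𝓝 0) := by
  have hL : HasDerivAt (fun y => log (1 - y ^ 2)) 0 0 := by
    simpa using ((hasDerivAt_pow 2 (0 : ℝ)).const_sub 1).log (by norm_num)
  have hslope : Tendsto (fun y => log (1 - y ^ 2) / y) (𝓝[>] 0) (𝓝 0) := by
    simpa [div_eq_inv_mul] using hL.tendsto_slope_zero_right
  have hLi : ContinuousAt Li2 (1 / 2) :=
    (hasDerivAt_Li2 (by norm_num) (by norm_num [abs_of_pos])).continuousAt
  have hrest : ContinuousAt (fun y => (-1 + log 2 / 2 + log (1 - y ^ 2) / 4) *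
      log ((1 - y) / (1 + y)) + (Li2 ((1 + y) / 2) - Li2 ((1 - y) / 2)) / 2) 0 := by
    have h₁ : ContinuousAt (fun y : ℝ => Li2 ((1 + y) / 2)) 0 :=
      hLi.comp_of_eq (by fun_prop) (by norm_num)
    have h₂ : ContinuousAt (fun y : ℝ => Li2 ((1 - y) / 2)) 0 :=
      hLi.comp_of_eq (by fun_prop) (by norm_num)
    fun_prop (disch := norm_num)
  convert hslope.add (hrest.tendsto.mono_left nhdsWithin_le_nhds) using 1
  · ext y
    rw [harmonicOddClosedForm, add_assoc]
  · simp

lemma eqOn_Ioo_of_hasDerivAt_of_tendsto_nhdsGT {f g f' : ℝ → ℝ} {a b l : ℝ}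
    (hf : ∀ x ∈ Ioo a b, HasDerivAt f (f' x) x) (hg : ∀ x ∈ Ioo a b, HasDerivAt g (f' x) x)
    (hfl : Tendsto f (𝓝[>] a) (𝓝 l)) (hgl : Tendsto g (𝓝[>] a) (𝓝 l)) :
    EqOn f g (Ioo a b) := by
  intro x hx
  obtain ⟨c, hc⟩ := isOpen_Ioo.exists_eq_add_of_deriv_eq isPreconnected_Ioo
    (fun y hy => (hf y hy).differentiableAt.differentiableWithinAt)
    (fun y hy => (hg y hy).differentiableAt.differentiableWithinAt)
    (fun y hy => (hf y hy).deriv.trans (hg y hy).deriv.symm)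
  have hgc : Tendsto f (𝓝[>] a) (𝓝 (l + c)) :=
    (hgl.add_const c).congr' (eventuallyEq_of_mem (Ioo_mem_nhdsGT (hx.1.trans hx.2)) hc.symm)
  have hl : l = l + c := tendsto_nhds_unique hfl hgc
  rw [hc hx]
  linarith

lemma harmonicOddSeries_eqOn_closedForm :
    EqOn harmonicOddSeries harmonicOddClosedForm (Ioo 0 1) := by
  have hlt : ∀ x ∈ Ioo (0 : ℝ) 1, |x| < 1 := fun x hx =>
    abs_lt.mpr ⟨by linarith [hx.1], hx.2⟩
  refine eqOn_Ioo_of_hasDerivAt_of_tendsto_nhdsGT (fun x hx => ?_)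
    (fun x hx => hasDerivAt_harmonicOddClosedForm hx.1.ne' (hlt x hx)) ?_
    tendsto_harmonicOddClosedForm_nhdsGT_zero
  · rw [← (hasSum_harmonic_succ_mul_pow_two_mul hx.1.ne' (hlt x hx)).tsum_eq]
    exact hasDerivAt_harmonicOddSeries (hlt x hx)
  · have h0 : harmonicOddSeries 0 = 0 := by simp [harmonicOddSeries]
    have hcont := (hasDerivAt_harmonicOddSeries (x := 0) (by simp)).continuousAt
    simpa [h0] using hcont.tendsto.mono_left (nhdsWithin_le_nhds (s := Ioi 0))

theorem stmt5 (t : ℝ) (ht0 : 0 ≤ t) (ht1 : t < 1) :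
    HasSum (fun n : ℕ => (harmonic (n + 1) : ℝ) * t ^ (n + 1) / (2 * (n + 1) - 1))
      (Real.log (1 - t) +
        (-1 + Real.log (Real.sqrt 2) + (1 / 4) * Real.log (1 - t)) * Real.sqrt t *
          Real.log ((1 - Real.sqrt t) / (1 + Real.sqrt t)) +
        (Real.sqrt t / 2) * (Li2 ((1 + Real.sqrt t) / 2) - Li2 ((1 - Real.sqrt t) / 2))) := by
  obtain rfl | ht := ht0.eq_or_lt
  · simp
  set s := √t
  have hs : s ∈ Ioo 0 1 := ⟨sqrt_pos.mpr ht, (sqrt_lt' one_pos).mpr (by simpa using ht1)⟩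
  have hts : t = s ^ 2 := (sq_sqrt ht0).symm
  have hsummable :
      Summable fun n : ℕ => (harmonic (n + 1) : ℝ) * t ^ (n + 1) / (2 * (n + 1) - 1) := by
    have hnum (n : ℕ) : 0 ≤ (harmonic (n + 1) : ℝ) * t ^ (n + 1) :=
      mul_nonneg (harmonic_nonneg _) (by positivity)
    have hden (n : ℕ) : (1 : ℝ) ≤ 2 * (n + 1) - 1 := by linarith [n.cast_nonneg (α := ℝ)]
    have ht : |t| < 1 := by rwa [abs_of_nonneg ht0]
    exact ((summable_nat_add_iff 1).mpr (summable_harmonic_mul_pow ht)).of_nonneg_of_le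
      (fun n => div_nonneg (hnum n) (zero_le_one.trans (hden n)))
      fun n => div_le_self (hnum n) (hden n)
  have hterm (n : ℕ) : (harmonic (n + 1) : ℝ) * t ^ (n + 1) / (2 * (n + 1) - 1) =
      s * ((harmonic (n + 1) : ℝ) * s ^ (2 * n + 1) / (2 * n + 1)) := by
    rw [hts, ← pow_mul]
    ring
  convert hsummable.hasSum using 1
  rw [tsum_congr hterm, tsum_mul_left, ← harmonicOddSeries, harmonicOddSeries_eqOn_closedForm hs,
    harmonicOddClosedForm, log_sqrt zero_le_two, hts]
  have hs0 : s ≠ 0 := hs.1.ne'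
  field_simp
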